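/- Let G be a finite simple graph and let (C₁,F₁) and (C₂,F₂) be antlers in G. Then (C₁ \ (C₂ ∪ F₂), F₁ \ (C₂ ∪ F₂)) is an antler in the graph G − (C₂ ∪ F₂). -/

import Mathlib

variable {V : Type*}

/-- The subgraph of `G` with edges restricted to the vertex set `S`
(kept on the same vertex type; vertices outside `S` become isolated).
Used to model the induced subgraph `G[S]` and vertex deletion `G - X = G[Xᶜ]`. -/
def graphRestrict (G : SimpleGraph V) (S : Set V) : SimpleGraph V where
  Adj u v := G.Adj u v ∧ u ∈ S ∧ v ∈ S
  symm := ⟨fun _ _ h => ⟨h.1.symm, h.2.2, h.2.1⟩⟩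
  loopless := ⟨fun v h => G.loopless.irrefl v h.1⟩

/-- `X` is a feedback vertex set of `G`: deleting `X` leaves an acyclic graph. -/
def IsFVS (G : SimpleGraph V) (X : Set V) : Prop :=
  (graphRestrict G Xᶜ).IsAcyclic

/-- The feedback vertex number of `G`: the minimum size of a feedback vertex set. -/
noncomputable def fvs (G : SimpleGraph V) : ℕ :=
  sInf {n | ∃ X : Set V, IsFVS G X ∧ X.ncard = n}

/-- `X` is a minimum feedback vertex set of `G`. -/
def IsMinFVS (G : SimpleGraph V) (X : Set V) : Prop :=
  IsFVS G X ∧ ∀ Y : Set V, IsFVS G Y → X.ncard ≤ Y.ncard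

/-- `(C, F)` is a feedback vertex cut in `G`: `C` and `F` are disjoint, `G[F]` is a
forest, and every tree of `G[F]` has at most one edge to `V(G) \ (C ∪ F)` (i.e. any two
edges from the same component of `G[F]` to the outside coincide). -/
def IsFVC (G : SimpleGraph V) (C F : Set V) : Prop :=
  Disjoint C F ∧ (graphRestrict G F).IsAcyclic ∧
    ∀ u₁ u₂ w₁ w₂ : V, u₁ ∈ F → u₂ ∈ F →
      (graphRestrict G F).Reachable u₁ u₂ →
      w₁ ∉ C ∪ F → w₂ ∉ C ∪ F → G.Adj u₁ w₁ → G.Adj u₂ w₂ →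
      u₁ = u₂ ∧ w₁ = w₂

/-- `(C, F)` is an antler in `G`: a feedback vertex cut with `|C| ≤ fvs(G[C ∪ F])`. -/
def IsAntler (G : SimpleGraph V) (C F : Set V) : Prop :=
  IsFVC G C F ∧ C.ncard ≤ fvs (graphRestrict G (C ∪ F))

/-- A graph `H` together with a vertex set `C` "has order `z`" if every connected
component `H'` of `H` satisfies `fvs(H') = |C ∩ V(H')| ≤ z`. -/
def HasCertOrder {W : Type*} (H : SimpleGraph W) (C : Set W) (z : ℕ) : Prop :=
  ∀ v : W,
    fvs (graphRestrict H {u | H.Reachable u v}) = (C ∩ {u | H.Reachable u v}).ncard ∧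
    (C ∩ {u | H.Reachable u v}).ncard ≤ z

/-- `H` is a `C`-certificate in `G`: a subgraph of `G` for which `C` is a minimum
feedback vertex set. -/
def IsCCertificate (G : SimpleGraph V) (C : Set V) (H : G.Subgraph) : Prop :=
  C ⊆ H.verts ∧ IsMinFVS H.coe {u : H.verts | (u : V) ∈ C}

/-- `H` is a `C`-certificate of order `z` in `G`. -/
def IsCCertificateOfOrder (G : SimpleGraph V) (C : Set V) (H : G.Subgraph) (z : ℕ) : Prop :=
  IsCCertificate G C H ∧ HasCertOrder H.coe {u : H.verts | (u : V) ∈ C} z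

/-- `(C, F)` is a `z`-antler in `G`: an antler such that `G[C ∪ F]` contains a
`C`-certificate of order `z`. -/
def IsZAntler (G : SimpleGraph V) (z : ℕ) (C F : Set V) : Prop :=
  IsAntler G C F ∧ ∃ H : G.Subgraph, H.verts ⊆ C ∪ F ∧ IsCCertificateOfOrder G C H z

/-- The function `f_r(x) = 2x³ + 3x² - x`. -/
def fr (x : ℕ) : ℕ := 2 * x ^ 3 + 3 * x ^ 2 - x

/-- A feedback vertex cut `(C, F)` is reducible if `|F| > f_r(|C|)`. -/
def IsReducibleFVC (G : SimpleGraph V) (C F : Set V) : Prop :=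
  IsFVC G C F ∧ fr C.ncard < F.ncard

/-- A feedback vertex cut `(C, F)` is simple if `|F| ≤ 2 f_r(|C|)` and either
`G[F]` is connected, or all trees of `G[F]` have a common neighbor `v` and there is a
single-tree feedback vertex cut `(C, F₂)` with `v ∈ F₂ \ F` and `F ⊆ F₂`. -/
def IsSimpleFVC (G : SimpleGraph V) (C F : Set V) : Prop :=
  IsFVC G C F ∧ F.ncard ≤ 2 * fr C.ncard ∧
    ((G.induce F).Connected ∨
      ∃ v : V,
        (∀ u ∈ F, ∃ u' ∈ F, (graphRestrict G F).Reachable u u' ∧ G.Adj u' v) ∧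
        ∃ F₂ : Set V, IsFVC G C F₂ ∧ (G.induce F₂).Connected ∧ v ∈ F₂ \ F ∧ F ⊆ F₂)

/-- `G` contains a `v`-flower of order `k`: `k` cycles whose vertex sets pairwise
intersect exactly in `{v}`. -/
def HasFlower (G : SimpleGraph V) (v : V) (k : ℕ) : Prop :=
  ∃ c : Fin k → G.Walk v v,
    (∀ i, (c i).IsCycle) ∧
    ∀ i j, i ≠ j → {x | x ∈ (c i).support} ∩ {x | x ∈ (c j).support} = {v}

/-- `G` contains `k` pairwise vertex-disjoint cycles. -/
def HasDisjointCycles (G : SimpleGraph V) (k : ℕ) : Prop :=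
  ∃ (b : Fin k → V) (c : ∀ i, G.Walk (b i) (b i)),
    (∀ i, (c i).IsCycle) ∧
    ∀ i j, i ≠ j → Disjoint {x | x ∈ (c i).support} {x | x ∈ (c j).support}

/-- `(C, F)` is a 1-antler in `G` (self-contained definition): `G[F]` is a forest,
every tree of `G[F]` has at most one edge to `V(G) \ (C ∪ F)`, and `G[C ∪ F]`
contains `|C|` pairwise vertex-disjoint cycles. -/
def IsOneAntler (G : SimpleGraph V) (C F : Set V) : Prop :=
  IsFVC G C F ∧ HasDisjointCycles (graphRestrict G (C ∪ F)) C.ncard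

/-- `C 1, F 1, …, C ℓ, F ℓ` is a `z`-antler-sequence for `G`: the sets are pairwise
disjoint and each `(C i, F i)` is a `z`-antler in `G` minus all earlier sets. -/
def IsAntlerSeq (G : SimpleGraph V) (z ℓ : ℕ) (C F : Fin ℓ → Set V) : Prop :=
  (∀ i j, i ≠ j → Disjoint (C i) (C j)) ∧
  (∀ i j, i ≠ j → Disjoint (F i) (F j)) ∧
  (∀ i j, Disjoint (C i) (F j)) ∧
  ∀ i, IsZAntler (graphRestrict G (⋃ j, ⋃ (_ : j < i), (C j ∪ F j))ᶜ) z (C i) (F i)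

/-!
Exchange argument. If `(C, F)` is a feedback vertex cut and `U` avoids `C`, then a cycle of `G[U]`
cannot cross between `F` and `U \ F`: an edge `uw` with `u ∈ F`, `w ∉ F` is a bridge, because any
walk from `u` back to `w` must leave the tree of `G[F]` containing `u`, and the only edge leaving
that tree is `uw` itself. Hence `G[U]` is acyclic as soon as `G[U \ F]` is, and in any feedback
vertex set the part inside an antler `(C, F)` may be replaced by `C`.

With `S = C₁ ∪ F₁ ∪ C₂ ∪ F₂`, take a minimum feedback vertex set `Y` of `G[S]` containing `C₁`.
Its part inside `C₂ ∪ F₂` has at least `|C₂|` vertices, its part outside contains `C₁ \ (C₂ ∪ F₂)`,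
and `fvs G[S] ≤ fvs G[S \ (C₂ ∪ F₂)] + |C₂|`; comparing the two bounds gives the antler inequality.
-/

open SimpleGraph

section

variable {G : SimpleGraph V}

lemma graphRestrict_le {S : Set V} : graphRestrict G S ≤ G :=
  fun _ _ h => h.1

lemma graphRestrict_mono {G' : SimpleGraph V} {A B : Set V} (hG : G ≤ G') (h : A ⊆ B) :
    graphRestrict G A ≤ graphRestrict G' B :=
  fun _ _ hadj => ⟨hG hadj.1, h hadj.2.1, h hadj.2.2⟩

lemma graphRestrict_graphRestrict (A B : Set V) :
    graphRestrict (graphRestrict G A) B = graphRestrict G (A ∩ B) := by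
  ext u v
  simp only [graphRestrict, Set.mem_inter_iff]
  tauto

lemma isFVS_graphRestrict_iff {S X : Set V} :
    IsFVS (graphRestrict G S) X ↔ (graphRestrict G (S \ X)).IsAcyclic := by
  rw [IsFVS, graphRestrict_graphRestrict, Set.sdiff_eq]

lemma fvs_le_ncard {X : Set V} (h : IsFVS G X) : fvs G ≤ X.ncard :=
  Nat.sInf_le ⟨X, h, rfl⟩

lemma isFVS_univ (G : SimpleGraph V) : IsFVS G Set.univ := by
  rintro _ (_ | ⟨hadj, _⟩) hc
  exacts [hc.ne_nil rfl, hadj.2.1 trivial]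

lemma exists_isFVS_ncard_eq_fvs (G : SimpleGraph V) : ∃ X, IsFVS G X ∧ X.ncard = fvs G :=
  Nat.sInf_mem (s := {n | ∃ X : Set V, IsFVS G X ∧ X.ncard = n})
    ⟨_, Set.univ, isFVS_univ G, rfl⟩

lemma SimpleGraph.Walk.exists_boundary_dart_reachable {u w : V} (p : G.Walk u w) (S : Set V)
    (hu : u ∈ S) (hw : w ∉ S) :
    ∃ d ∈ p.darts, d.fst ∈ S ∧ d.snd ∉ S ∧ (graphRestrict G S).Reachable u d.fst := by
  induction p with
  | nil => exact absurd hu hw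
  | @cons u x w hadj q ih =>
    by_cases hx : x ∈ S
    · obtain ⟨d, hd, hdS, hdS', hreach⟩ := ih hx hw
      exact ⟨d, List.mem_cons_of_mem _ hd, hdS, hdS',
        (show (graphRestrict G S).Adj u x from ⟨hadj, hu, hx⟩).reachable.trans hreach⟩
    · exact ⟨⟨(u, x), hadj⟩, List.mem_cons_self, hu, hx, Reachable.refl _⟩

lemma SimpleGraph.IsAcyclic.exists_notMem_support_of_isCycle {S : Set V}
    (hS : (graphRestrict G S).IsAcyclic) {v : V} {c : G.Walk v v} (hc : c.IsCycle) :
    ∃ x ∈ c.support, x ∉ S := by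
  by_contra! hsupp
  refine hS _ (hc.transfer fun e he => ?_)
  induction e using Sym2.ind with
  | _ a b =>
    exact ⟨c.adj_of_mem_edges he, hsupp _ (c.fst_mem_support_of_mem_edges he),
      hsupp _ (c.snd_mem_support_of_mem_edges he)⟩

namespace IsFVC

variable {C F U : Set V}

lemma isBridge_of_adj (h : IsFVC G C F) (hU : Disjoint U C) {u w : V} (hu : u ∈ F) (hw : w ∉ F)
    (hadj : (graphRestrict G U).Adj u w) : (graphRestrict G U).IsBridge s(u, w) := by
  rw [isBridge_iff_forall_walk_mem_edges]
  intro p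
  obtain ⟨d, hd, hdF, hdF', hreach⟩ := p.exists_boundary_dart_reachable F hu hw
  have houtside {x : V} (hxU : x ∈ U) (hxF : x ∉ F) : x ∉ C ∪ F := by
    rintro (hxC | hxF')
    exacts [Set.disjoint_left.1 hU hxU hxC, hxF hxF']
  obtain ⟨rfl, rfl⟩ := h.2.2 u d.fst w d.snd hu hdF
    (hreach.mono (graphRestrict_mono graphRestrict_le subset_rfl))
    (houtside hadj.2.2 hw) (houtside d.adj.2.2 hdF') hadj.1 d.adj.1
  exact List.mem_map_of_mem hd

lemma isAcyclic_graphRestrict (h : IsFVC G C F) (hU : Disjoint U C)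
    (hac : (graphRestrict G (U \ F)).IsAcyclic) : (graphRestrict G U).IsAcyclic := by
  classical
  intro v c hc
  have hacF : (graphRestrict (graphRestrict G U) F).IsAcyclic :=
    h.2.1.anti (graphRestrict_mono graphRestrict_le subset_rfl)
  have hacFc : (graphRestrict (graphRestrict G U) Fᶜ).IsAcyclic := by
    rwa [graphRestrict_graphRestrict, ← Set.sdiff_eq]
  obtain ⟨x, hx, hxF⟩ := hacF.exists_notMem_support_of_isCycle hc
  obtain ⟨y, hy, hyF⟩ := hacFc.exists_notMem_support_of_isCycle hc
  rw [Set.notMem_compl_iff] at hyF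
  obtain ⟨d, hd, hdF, hdF'⟩ :=
    ((c.dropUntil y hy).append (c.takeUntil x hx)).exists_boundary_dart F hyF hxF
  have hdc : d ∈ c.darts := by
    rcases List.mem_append.1 (Walk.darts_append _ _ ▸ hd) with hd | hd
    exacts [c.darts_dropUntil_subset_darts hy hd, c.darts_takeUntil_subset_darts hx hd]
  exact (h.isBridge_of_adj hU hdF hdF' d.adj).notMem_edges_of_isCycle hc
    (List.mem_map_of_mem hdc)

lemma restrict (h : IsFVC G C F) (W : Set V) :
    IsFVC (graphRestrict G W) (C ∩ W) (F ∩ W) := by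
  refine ⟨h.1.mono Set.inter_subset_left Set.inter_subset_left, ?_, ?_⟩
  · rw [graphRestrict_graphRestrict]
    exact h.2.1.anti (graphRestrict_mono le_rfl fun x hx => hx.2.1)
  · intro u₁ u₂ w₁ w₂ hu₁ hu₂ hreach hw₁ hw₂ ha₁ ha₂
    have houtside {w : V} (hwW : w ∈ W) (hw : w ∉ C ∩ W ∪ F ∩ W) : w ∉ C ∪ F := by
      rintro (hwC | hwF)
      exacts [hw (Or.inl ⟨hwC, hwW⟩), hw (Or.inr ⟨hwF, hwW⟩)]
    refine h.2.2 u₁ u₂ w₁ w₂ hu₁.1 hu₂.1 (hreach.mono ?_) (houtside ha₁.2.2 hw₁)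
      (houtside ha₂.2.2 hw₂) ha₁.1 ha₂.1
    rw [graphRestrict_graphRestrict]
    exact graphRestrict_mono le_rfl fun x hx => hx.2.1

lemma fvs_graphRestrict_le (h : IsFVC G C F) (S : Set V) :
    fvs (graphRestrict G S) ≤ fvs (graphRestrict G (S \ (C ∪ F))) + C.ncard := by
  obtain ⟨X, hX, hXcard⟩ := exists_isFVS_ncard_eq_fvs (graphRestrict G (S \ (C ∪ F)))
  have hXC : IsFVS (graphRestrict G S) (X ∪ C) := by
    rw [isFVS_graphRestrict_iff] at hX ⊢
    refine h.isAcyclic_graphRestrict (Set.disjoint_left.2 fun x hx hxC => hx.2 (Or.inr hxC))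
      (hX.anti (graphRestrict_mono le_rfl ?_))
    rintro x ⟨⟨hxS, hxXC⟩, hxF⟩
    exact ⟨⟨hxS, fun hxCF => hxCF.elim (fun hxC => hxXC (Or.inr hxC)) hxF⟩,
      fun hxX => hxXC (Or.inl hxX)⟩
  calc fvs (graphRestrict G S) ≤ (X ∪ C).ncard := fvs_le_ncard hXC
    _ ≤ X.ncard + C.ncard := Set.ncard_union_le _ _
    _ = _ := by rw [hXcard]

end IsFVC

namespace IsAntler

variable {C F S Y : Set V}

lemma ncard_le_ncard_inter (h : IsAntler G C F) (hS : C ∪ F ⊆ S)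
    (hY : IsFVS (graphRestrict G S) Y) : C.ncard ≤ (Y ∩ (C ∪ F)).ncard := by
  refine h.2.trans (fvs_le_ncard (isFVS_graphRestrict_iff.2 ?_))
  refine (isFVS_graphRestrict_iff.1 hY).anti (graphRestrict_mono le_rfl ?_)
  exact fun x hx => ⟨hS hx.1, fun hxY => hx.2 ⟨hxY, hx.1⟩⟩

lemma exists_isFVS_ncard_eq_fvs_superset [Finite V] (h : IsAntler G C F) (hS : C ∪ F ⊆ S) :
    ∃ Y, IsFVS (graphRestrict G S) Y ∧ Y.ncard = fvs (graphRestrict G S) ∧ C ⊆ Y := by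
  obtain ⟨Y, hY, hYcard⟩ := exists_isFVS_ncard_eq_fvs (graphRestrict G S)
  have hY' : IsFVS (graphRestrict G S) (Y \ (C ∪ F) ∪ C) := by
    rw [isFVS_graphRestrict_iff] at hY ⊢
    refine h.1.isAcyclic_graphRestrict (Set.disjoint_left.2 fun x hx hxC => hx.2 (Or.inr hxC))
      (hY.anti (graphRestrict_mono le_rfl ?_))
    rintro x ⟨⟨hxS, hxY'⟩, hxF⟩
    exact ⟨hxS, fun hxY => hxY' (Or.inl ⟨hxY, fun hxCF =>
      hxCF.elim (fun hxC => hxY' (Or.inr hxC)) hxF⟩)⟩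
  refine ⟨_, hY', le_antisymm ?_ (fvs_le_ncard hY'), Set.subset_union_right⟩
  calc (Y \ (C ∪ F) ∪ C).ncard ≤ (Y \ (C ∪ F)).ncard + C.ncard := Set.ncard_union_le _ _
    _ ≤ (Y \ (C ∪ F)).ncard + (Y ∩ (C ∪ F)).ncard :=
        Nat.add_le_add_left (h.ncard_le_ncard_inter hS hY) _
    _ = fvs (graphRestrict G S) := by
        rw [add_comm, Set.ncard_inter_add_ncard_sdiff_eq_ncard, hYcard]

end IsAntler

end

theorem stmt5 [Fintype V] (G : SimpleGraph V) (C₁ F₁ C₂ F₂ : Set V)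
    (h₁ : IsAntler G C₁ F₁) (h₂ : IsAntler G C₂ F₂) :
    IsAntler (graphRestrict G (C₂ ∪ F₂)ᶜ) (C₁ \ (C₂ ∪ F₂)) (F₁ \ (C₂ ∪ F₂)) := by
  set R := C₂ ∪ F₂
  refine ⟨by simpa only [Set.sdiff_eq] using h₁.1.restrict Rᶜ, ?_⟩
  set S := C₁ ∪ F₁ ∪ R
  have hres : graphRestrict (graphRestrict G Rᶜ) (C₁ \ R ∪ F₁ \ R) = graphRestrict G (S \ R) := by
    rw [graphRestrict_graphRestrict, Set.union_sdiff_right, Set.union_sdiff_distrib,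
      Set.inter_eq_right.2 (Set.union_subset (fun x hx => hx.2) fun x hx => hx.2)]
  obtain ⟨Y, hY, hYcard, hC₁Y⟩ : ∃ Y, IsFVS (graphRestrict G S) Y ∧
      Y.ncard = fvs (graphRestrict G S) ∧ C₁ ⊆ Y :=
    h₁.exists_isFVS_ncard_eq_fvs_superset Set.subset_union_left
  have hC₁ : (C₁ \ R).ncard ≤ (Y \ R).ncard :=
    Set.ncard_le_ncard (Set.sdiff_subset_sdiff_left hC₁Y)
  have hC₂ : C₂.ncard ≤ (Y ∩ R).ncard := h₂.ncard_le_ncard_inter Set.subset_union_right hY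
  rw [hres]
  refine Nat.le_of_add_le_add_right (b := C₂.ncard) ?_
  calc (C₁ \ R).ncard + C₂.ncard ≤ (Y \ R).ncard + (Y ∩ R).ncard := Nat.add_le_add hC₁ hC₂
    _ = fvs (graphRestrict G S) := by
        rw [add_comm, Set.ncard_inter_add_ncard_sdiff_eq_ncard, hYcard]
    _ ≤ fvs (graphRestrict G (S \ R)) + C₂.ncard := h₂.1.fvs_graphRestrict_le S
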